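/- Let H ∈ 𝔄 be reflection invariant and globally gauge invariant with positive semidefinite coupling matrix J = (J_{𝔍𝔍'})_{𝔍,𝔍'∈𝒫₊}. If A ∈ 𝔄₊ has expansion A = Σ_{𝔍∈𝒫₊} a_𝔍·C_𝔍, then Tr((Θ(A)∘A)·e^{−H}) ≥ |a_∅|², where a_∅ is the coefficient of the identity in A. -/

import Mathlib

open ComplexOrder

noncomputable section

/-- The setting of the paper: a finite set `Λ` with a fixed-point free involution `ϑ`
exchanging `Λp` and its complement, the Clifford algebra (algebra of Majoranas) `carrier`
with self-adjoint generators `c i`, the global gauge automorphism `gauge`, the antilinear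
reflection `*`-automorphism `Θ`, a square root `ζ` of `-1`, the twisted product `twist`,
a choice `P` of orderings of the subsets of `Λp` (giving the bases
`{C J : J ∈ P}` of `𝔄₊` and `{Θ(C J) ∘ C J' : J, J' ∈ P}` of `𝔄`),
and the tracial state `Tr` picking out the coefficient of `1` in the basis expansion. -/
structure MajoranaSetting where
  Λ : Type
  [fintypeΛ : Fintype Λ]
  [deceqΛ : DecidableEq Λ]
  ϑ : Λ → Λ
  ϑ_invol : Function.Involutive ϑ
  ϑ_fixfree : ∀ i, ϑ i ≠ i
  Λp : Finset Λ
  ϑ_exch : ∀ i, i ∈ Λp ↔ ϑ i ∉ Λp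
  carrier : Type
  [nring : NormedRing carrier]
  [nalg : NormedAlgebra ℂ carrier]
  [cmpl : CompleteSpace carrier]
  [starring : StarRing carrier]
  [starmod : StarModule ℂ carrier]
  c : Λ → carrier
  c_star : ∀ i, star (c i) = c i
  clifford : ∀ i j, c i * c j + c j * c i = if i = j then (2 : carrier) else 0
  gauge : carrier ≃ₐ[ℂ] carrier
  gauge_c : ∀ i, gauge (c i) = - c i
  Θ : carrier → carrier
  Θ_add : ∀ x y, Θ (x + y) = Θ x + Θ y
  Θ_smul : ∀ (z : ℂ) (x), Θ (z • x) = (starRingEnd ℂ z) • Θ x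
  Θ_mul : ∀ x y, Θ (x * y) = Θ x * Θ y
  Θ_star : ∀ x, Θ (star x) = star (Θ x)
  Θ_invol : ∀ x, Θ (Θ x) = x
  Θ_c : ∀ i, Θ (c i) = c (ϑ i)
  ζ : ℂ
  ζ_sq : ζ ^ 2 = -1
  twist : carrier → carrier → carrier
  twist_add_left : ∀ x x' y, twist (x + x') y = twist x y + twist x' y
  twist_add_right : ∀ x y y', twist x (y + y') = twist x y + twist x y'
  twist_smul_left : ∀ (z : ℂ) (x y), twist (z • x) y = z • twist x y
  twist_smul_right : ∀ (z : ℂ) (x y), twist x (z • y) = z • twist x y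
  twist_spec : ∀ (Am Ap Bm Bp : carrier) (a b a' b' : ℕ),
    a ≤ 1 → b ≤ 1 → a' ≤ 1 → b' ≤ 1 →
    Am ∈ Algebra.adjoin ℂ (c '' {i | i ∉ Λp}) →
    Ap ∈ Algebra.adjoin ℂ (c '' {i | i ∈ Λp}) →
    Bm ∈ Algebra.adjoin ℂ (c '' {i | i ∉ Λp}) →
    Bp ∈ Algebra.adjoin ℂ (c '' {i | i ∈ Λp}) →
    gauge Am = ((-1 : ℂ) ^ a) • Am →
    gauge Ap = ((-1 : ℂ) ^ b) • Ap →
    gauge Bm = ((-1 : ℂ) ^ a') • Bm →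
    gauge Bp = ((-1 : ℂ) ^ b') • Bp →
    twist (Am * Ap) (Bm * Bp)
      = ζ ^ ((a * b' : ℤ) - (b * a' : ℤ)) • (Am * Ap * (Bm * Bp))
  P : Finset (List Λ)
  P_nodup : ∀ J ∈ P, J.Nodup
  P_sub : ∀ J ∈ P, ∀ i ∈ J, i ∈ Λp
  P_unique : ∀ s : Finset Λ, s ⊆ Λp → ∃! J, J ∈ P ∧ J.toFinset = s
  Tr : carrier →ₗ[ℂ] ℂ
  Tr_basis : ∀ J ∈ P, ∀ J' ∈ P,
    Tr (twist (Θ ((J.map c).prod)) ((J'.map c).prod))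
      = if J = [] ∧ J' = [] then 1 else 0
  basis_indep : LinearIndependent ℂ
    (fun p : {J // J ∈ P} × {J // J ∈ P} =>
      twist (Θ ((p.1.1.map c).prod)) ((p.2.1.map c).prod))
  basis_span : ∀ x : carrier, x ∈ Submodule.span ℂ
    (Set.range fun p : {J // J ∈ P} × {J // J ∈ P} =>
      twist (Θ ((p.1.1.map c).prod)) ((p.2.1.map c).prod))
  plus_span : ∀ x ∈ Algebra.adjoin ℂ (c '' {i | i ∈ Λp}),
    x ∈ Submodule.span ℂ (Set.range fun J : {J // J ∈ P} => ((J.1.map c).prod))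

attribute [instance] MajoranaSetting.fintypeΛ MajoranaSetting.deceqΛ
  MajoranaSetting.nring MajoranaSetting.nalg MajoranaSetting.cmpl
  MajoranaSetting.starring MajoranaSetting.starmod

namespace MajoranaSetting

variable (S : MajoranaSetting)

/-- The subalgebra `𝔄₊` generated by the Majoranas on the `+` side. -/
def Aplus : Subalgebra ℂ S.carrier := Algebra.adjoin ℂ (S.c '' {i | i ∈ S.Λp})

/-- The subalgebra `𝔄₋` generated by the Majoranas on the `-` side. -/
def Aminus : Subalgebra ℂ S.carrier := Algebra.adjoin ℂ (S.c '' {i | i ∉ S.Λp})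

/-- The monomial `C_𝔍 = c_{i₁} ⋯ c_{i_k}`. -/
def C (J : List S.Λ) : S.carrier := (J.map S.c).prod

/-- `q_𝔍 = (-1)^{k(k-1)/2}`. -/
def q (J : List S.Λ) : ℂ := (-1 : ℂ) ^ (J.length * (J.length - 1) / 2)

/-- `s_𝔍 = ζ^{k(k-1)/2}`. -/
def sgn (J : List S.Λ) : ℂ := S.ζ ^ (J.length * (J.length - 1) / 2)

/-- The exponential `e^x` in the (finite-dimensional) algebra `𝔄`. -/
def expm (x : S.carrier) : S.carrier := NormedSpace.exp x

/-- The Hamiltonian `H = -∑_{𝔍,𝔍' ∈ 𝒫₊} J_{𝔍𝔍'} Θ(C_𝔍) ∘ C_𝔍'`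
determined by coupling constants `Jc`. -/
def Ham (Jc : List S.Λ → List S.Λ → ℂ) : S.carrier :=
  - ∑ J ∈ S.P, ∑ J' ∈ S.P, Jc J J' • S.twist (S.Θ (S.C J)) (S.C J')

/-- The index type of the basis `{C J : J ∈ 𝒫₊}`. -/
abbrev PIdx := {J : List S.Λ // J ∈ S.P}

/-- The index type `𝒫₊ - {∅}` of couplings across the reflection plane. -/
abbrev PIdx0 := {p : S.PIdx // p.1 ≠ []}

/-- The full matrix of coupling constants. -/
def Jmat (Jc : List S.Λ → List S.Λ → ℂ) : Matrix S.PIdx S.PIdx ℂ :=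
  Matrix.of fun p q => Jc p.1 q.1

/-- The matrix `J⁰` of coupling constants across the reflection plane. -/
def Jmat0 (Jc : List S.Λ → List S.Λ → ℂ) : Matrix S.PIdx0 S.PIdx0 ℂ :=
  Matrix.of fun p q => Jc p.1.1 q.1.1

end MajoranaSetting


/-!
Expand `e^{-H} = ∑ₙ (-H)ⁿ / n!`. For gauge-homogeneous `A, B ∈ 𝔄₊` one has
`(Θ(A) ∘ A)(Θ(B) ∘ B) = Θ(AB) ∘ (AB)`: the ζ-phases of the twisted products exactly compensate
the sign from moving `A` past `Θ(B)`. So the elements `Θ(B) ∘ B` form a multiplicative monoid, and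
its additive closure is a semiring. Gauge invariance and `J ≥ 0` write `-H` as a sum of such
elements, so every `(-H)ⁿ` lies in this semiring. On it `X ↦ Tr((Θ(A) ∘ A) X)` is nonnegative:
splitting `A` into even and odd parts, the mixed terms are gauge-odd and traceless, and the others
are of the form `Tr(Θ(D) ∘ D) = |d_∅|² ≥ 0`. Every term of the series is therefore nonnegative,
and the `n = 0` term is `Tr(Θ(A) ∘ A) = |a_∅|²`.
-/

lemma inv_two_mul_one_add_neg_one_pow (m n : ℕ) :
    (2⁻¹ : ℂ) * (1 + (-1) ^ (m + n)) = if m % 2 = n % 2 then 1 else 0 := by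
  rw [neg_one_pow_eq_pow_mod_two, Nat.add_mod]
  rcases Nat.mod_two_eq_zero_or_one m with hm | hm <;>
    rcases Nat.mod_two_eq_zero_or_one n with hn | hn <;> norm_num [hm, hn]

namespace MajoranaSetting

variable (S : MajoranaSetting)

lemma C_cons (i : S.Λ) (L : List S.Λ) : S.C (i :: L) = S.c i * S.C L := List.prod_cons

lemma C_mem_Aplus {L : List S.Λ} (hL : ∀ i ∈ L, i ∈ S.Λp) : S.C L ∈ S.Aplus := by
  induction L with
  | nil => exact one_mem _
  | cons i L ih =>
    rw [C_cons]
    exact mul_mem (Algebra.subset_adjoin ⟨i, hL i List.mem_cons_self, rfl⟩)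
      (ih fun j hj => hL j (List.mem_cons_of_mem _ hj))

lemma gauge_C (L : List S.Λ) : S.gauge (S.C L) = (-1 : ℂ) ^ L.length • S.C L := by
  induction L with
  | nil => simp [C]
  | cons i L ih =>
    rw [C_cons, map_mul, S.gauge_c, ih, List.length_cons, pow_succ, mul_smul_comm, mul_comm,
      mul_smul, neg_one_smul, neg_mul, smul_neg]

lemma theta_one : S.Θ 1 = 1 := by
  calc S.Θ 1 = S.Θ (S.Θ 1) * S.Θ 1 := by rw [S.Θ_invol, one_mul]
    _ = S.Θ (S.Θ 1 * 1) := (S.Θ_mul _ _).symm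
    _ = 1 := by rw [mul_one, S.Θ_invol]

lemma theta_algebraMap (z : ℂ) :
    S.Θ (algebraMap ℂ S.carrier z) = algebraMap ℂ S.carrier (starRingEnd ℂ z) := by
  rw [Algebra.algebraMap_eq_smul_one, Algebra.algebraMap_eq_smul_one, S.Θ_smul, S.theta_one]

lemma theta_mem_Aminus {X : S.carrier} (hX : X ∈ S.Aplus) : S.Θ X ∈ S.Aminus := by
  induction hX using Algebra.adjoin_induction with
  | mem x hx =>
    obtain ⟨i, hi, rfl⟩ := hx
    rw [S.Θ_c]
    exact Algebra.subset_adjoin ⟨S.ϑ i, (S.ϑ_exch i).mp hi, rfl⟩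
  | algebraMap z => rw [theta_algebraMap]; exact Subalgebra.algebraMap_mem _ _
  | add x y _ _ hx hy => rw [S.Θ_add]; exact add_mem hx hy
  | mul x y _ _ hx hy => rw [S.Θ_mul]; exact mul_mem hx hy

lemma gauge_theta {X : S.carrier} (hX : X ∈ S.Aplus) : S.gauge (S.Θ X) = S.Θ (S.gauge X) := by
  induction hX using Algebra.adjoin_induction with
  | mem x hx =>
    obtain ⟨i, -, rfl⟩ := hx
    rw [S.Θ_c, S.gauge_c, S.gauge_c, ← neg_one_smul ℂ (S.c i), S.Θ_smul, S.Θ_c]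
    simp
  | algebraMap z => simp only [theta_algebraMap, AlgEquiv.commutes]
  | add x y _ _ hx hy => rw [S.Θ_add, map_add, map_add, S.Θ_add, hx, hy]
  | mul x y _ _ hx hy => rw [S.Θ_mul, map_mul, map_mul, S.Θ_mul, hx, hy]

def IsHomogeneousPlus (b : ℕ) (B : S.carrier) : Prop :=
  B ∈ S.Aplus ∧ S.gauge B = (-1 : ℂ) ^ b • B

variable {S}

lemma isHomogeneousPlus_one : S.IsHomogeneousPlus 0 1 :=
  ⟨one_mem _, by rw [map_one, pow_zero, one_smul]⟩

lemma IsHomogeneousPlus.mul {a b : ℕ} {A B : S.carrier} (hA : S.IsHomogeneousPlus a A)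
    (hB : S.IsHomogeneousPlus b B) : S.IsHomogeneousPlus (a + b) (A * B) :=
  ⟨mul_mem hA.1 hB.1, by rw [map_mul, hA.2, hB.2, smul_mul_smul_comm, pow_add]⟩

lemma IsHomogeneousPlus.mod_two {b : ℕ} {B : S.carrier} (hB : S.IsHomogeneousPlus b B) :
    S.IsHomogeneousPlus (b % 2) B :=
  ⟨hB.1, by rw [hB.2, neg_one_pow_eq_pow_mod_two]⟩

lemma IsHomogeneousPlus.gauge_theta {b : ℕ} {B : S.carrier} (hB : S.IsHomogeneousPlus b B) :
    S.gauge (S.Θ B) = (-1 : ℂ) ^ b • S.Θ B := by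
  rw [S.gauge_theta hB.1, hB.2, S.Θ_smul]
  simp

lemma IsHomogeneousPlus.twist_theta_eq {x y : ℕ} {X Y : S.carrier}
    (hX : S.IsHomogeneousPlus x X) (hY : S.IsHomogeneousPlus y Y) :
    S.twist (S.Θ X) Y = S.ζ ^ (x % 2 * (y % 2)) • (S.Θ X * Y) := by
  have h := S.twist_spec (S.Θ X) 1 1 Y (x % 2) 0 0 (y % 2) (by omega) (by omega) (by omega)
    (by omega) (S.theta_mem_Aminus hX.1) (one_mem _) (one_mem _) hY.1
    hX.mod_two.gauge_theta (by simp) (by simp) hY.mod_two.2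
  simpa only [mul_one, one_mul, Nat.cast_zero, mul_zero, sub_zero, ← Nat.cast_mul,
    zpow_natCast] using h

lemma IsHomogeneousPlus.gauge_twist_theta {x y : ℕ} {X Y : S.carrier}
    (hX : S.IsHomogeneousPlus x X) (hY : S.IsHomogeneousPlus y Y) :
    S.gauge (S.twist (S.Θ X) Y) = (-1 : ℂ) ^ (x + y) • S.twist (S.Θ X) Y := by
  rw [hX.twist_theta_eq hY, map_smul, map_mul, hX.gauge_theta, hY.2, smul_mul_smul_comm,
    smul_comm, pow_add]

lemma c_mul_eq_gauge_mul {i : S.Λ} (hi : i ∈ S.Λp) {Y : S.carrier} (hY : Y ∈ S.Aminus) :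
    S.c i * Y = S.gauge Y * S.c i := by
  induction hY using Algebra.adjoin_induction with
  | mem y hy =>
    obtain ⟨j, hj, rfl⟩ := hy
    have hij : i ≠ j := by rintro rfl; exact hj hi
    have h := S.clifford i j
    rw [if_neg hij, add_eq_zero_iff_eq_neg] at h
    rw [h, S.gauge_c, neg_mul]
  | algebraMap z => rw [AlgEquiv.commutes, Algebra.commutes]
  | add x y _ _ hx hy => rw [mul_add, hx, hy, map_add, add_mul]
  | mul x y _ _ hx hy => rw [← mul_assoc, hx, mul_assoc, hy, map_mul, mul_assoc]

lemma gauge_pow_apply {a : ℕ} {A : S.carrier} (hA : S.gauge A = (-1 : ℂ) ^ a • A) (n : ℕ) :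
    (S.gauge ^ n) A = (-1 : ℂ) ^ (a * n) • A := by
  induction n with
  | zero => simp
  | succ n ih => rw [pow_succ, AlgEquiv.mul_apply, hA, map_smul, ih, smul_smul, ← pow_add]; ring_nf

lemma mul_eq_mul_gauge_pow {y : ℕ} {Y : S.carrier} (hY : Y ∈ S.Aminus)
    (hYy : S.gauge Y = (-1 : ℂ) ^ y • Y) {X : S.carrier} (hX : X ∈ S.Aplus) :
    X * Y = Y * (S.gauge ^ y) X := by
  induction hX using Algebra.adjoin_induction with
  | mem x hx =>
    obtain ⟨i, hi, rfl⟩ := hx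
    rw [c_mul_eq_gauge_mul hi hY, hYy, gauge_pow_apply (a := 1) (by rw [S.gauge_c, pow_one,
      neg_one_smul]), one_mul, smul_mul_assoc, mul_smul_comm]
  | algebraMap z => rw [AlgEquiv.commutes, Algebra.commutes]
  | add x x' _ _ hx hx' => rw [add_mul, hx, hx', map_add, mul_add]
  | mul x x' _ _ hx hx' => rw [mul_assoc, hx', ← mul_assoc, hx, map_mul, mul_assoc]

lemma IsHomogeneousPlus.mul_eq_smul_mul {x y : ℕ} {X Y : S.carrier}
    (hX : S.IsHomogeneousPlus x X) (hY : Y ∈ S.Aminus) (hYy : S.gauge Y = (-1 : ℂ) ^ y • Y) :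
    X * Y = (-1 : ℂ) ^ (x * y) • (Y * X) := by
  rw [mul_eq_mul_gauge_pow hY hYy hX.1, gauge_pow_apply hX.2, mul_smul_comm]

/-- The phases of `Θ(A) ∘ A` and `Θ(B) ∘ B` and the sign from moving `A` past `Θ(B)` combine
into the phase of `Θ(AB) ∘ (AB)`. -/
lemma zeta_phase {a b : ℕ} (ha : a < 2) (hb : b < 2) :
    S.ζ ^ (a * a) * S.ζ ^ (b * b) * (-1) ^ (a * b) = S.ζ ^ ((a + b) % 2 * ((a + b) % 2)) := by
  interval_cases a <;> interval_cases b <;> simp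
  linear_combination -S.ζ_sq

lemma IsHomogeneousPlus.twist_theta_mul {a b : ℕ} {A B : S.carrier}
    (hA : S.IsHomogeneousPlus a A) (hB : S.IsHomogeneousPlus b B) :
    S.twist (S.Θ A) A * S.twist (S.Θ B) B = S.twist (S.Θ (A * B)) (A * B) := by
  have hcomm := hA.mod_two.mul_eq_smul_mul (S.theta_mem_Aminus hB.1) hB.mod_two.gauge_theta
  rw [hA.twist_theta_eq hA, hB.twist_theta_eq hB, (hA.mul hB).twist_theta_eq (hA.mul hB), S.Θ_mul,
    smul_mul_smul, mul_assoc (S.Θ A), ← mul_assoc A, hcomm, smul_mul_assoc, mul_smul_comm,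
    smul_smul, show S.Θ A * (S.Θ B * A * B) = S.Θ A * S.Θ B * (A * B) by simp only [mul_assoc],
    Nat.add_mod, ← zeta_phase (Nat.mod_lt a two_pos) (Nat.mod_lt b two_pos), mul_assoc]

variable (S)

lemma nil_mem_P : [] ∈ S.P := by
  obtain ⟨J, ⟨hJ, hJs⟩, -⟩ := S.P_unique ∅ (Finset.empty_subset _)
  rwa [(List.toFinset_eq_empty_iff J).mp hJs] at hJ

def nilIdx : S.PIdx := ⟨[], S.nil_mem_P⟩

lemma Tr_twist_theta_C (p q : S.PIdx) :
    S.Tr (S.twist (S.Θ (S.C p.1)) (S.C q.1)) = if p = S.nilIdx ∧ q = S.nilIdx then 1 else 0 :=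
  (S.Tr_basis p.1 p.2 q.1 q.2).trans (by simp only [nilIdx, Subtype.ext_iff])

lemma isHomogeneousPlus_C (p : S.PIdx) : S.IsHomogeneousPlus p.1.length (S.C p.1) :=
  ⟨S.C_mem_Aplus (S.P_sub p.1 p.2), S.gauge_C p.1⟩

def ofCoeffs (d : S.PIdx → ℂ) : S.carrier := ∑ p, d p • S.C p.1

def parityPart (i : ℕ) (d : S.PIdx → ℂ) (p : S.PIdx) : ℂ :=
  if p.1.length % 2 = i then d p else 0

lemma ofCoeffs_mem_Aplus (d : S.PIdx → ℂ) : S.ofCoeffs d ∈ S.Aplus :=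
  sum_mem fun p _ => Subalgebra.smul_mem _ (S.isHomogeneousPlus_C p).1 _

lemma isHomogeneousPlus_ofCoeffs_parityPart (i : ℕ) (d : S.PIdx → ℂ) :
    S.IsHomogeneousPlus i (S.ofCoeffs (S.parityPart i d)) := by
  refine ⟨S.ofCoeffs_mem_Aplus _, ?_⟩
  rw [ofCoeffs, map_sum, Finset.smul_sum]
  refine Finset.sum_congr rfl fun p _ => ?_
  rw [map_smul, S.gauge_C, parityPart]
  split_ifs with h
  · rw [smul_comm, neg_one_pow_eq_pow_mod_two, h]
  · simp

lemma ofCoeffs_parityPart_add (d : S.PIdx → ℂ) :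
    S.ofCoeffs (S.parityPart 0 d) + S.ofCoeffs (S.parityPart 1 d) = S.ofCoeffs d := by
  rw [ofCoeffs, ofCoeffs, ofCoeffs, ← Finset.sum_add_distrib]
  refine Finset.sum_congr rfl fun p _ => ?_
  rw [← add_smul, parityPart, parityPart]
  rcases Nat.mod_two_eq_zero_or_one p.1.length with h | h <;> simp [h]

lemma exists_ofCoeffs_eq {X : S.carrier} (hX : X ∈ S.Aplus) : ∃ d, S.ofCoeffs d = X :=
  (Submodule.mem_span_range_iff_exists_fun ℂ).mp (S.plus_span X hX)

lemma exists_isHomogeneousPlus_add_eq {X : S.carrier} (hX : X ∈ S.Aplus) :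
    ∃ X₀ X₁, S.IsHomogeneousPlus 0 X₀ ∧ S.IsHomogeneousPlus 1 X₁ ∧ X₀ + X₁ = X := by
  obtain ⟨d, rfl⟩ := S.exists_ofCoeffs_eq hX
  exact ⟨_, _, S.isHomogeneousPlus_ofCoeffs_parityPart 0 d,
    S.isHomogeneousPlus_ofCoeffs_parityPart 1 d, S.ofCoeffs_parityPart_add d⟩

lemma twist_theta_sum {ι : Type*} (s : Finset ι) (d : ι → ℂ) (v : ι → S.carrier) :
    S.twist (S.Θ (∑ i ∈ s, d i • v i)) (∑ j ∈ s, d j • v j)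
      = ∑ i ∈ s, ∑ j ∈ s, (starRingEnd ℂ (d i) * d j) • S.twist (S.Θ (v i)) (v j) := by
  let Θₗ : S.carrier →ₗ⋆[ℂ] S.carrier := ⟨⟨S.Θ, S.Θ_add⟩, S.Θ_smul⟩
  let twistₗ : S.carrier →ₗ[ℂ] S.carrier →ₗ[ℂ] S.carrier := LinearMap.mk₂ ℂ S.twist
    S.twist_add_left S.twist_smul_left S.twist_add_right S.twist_smul_right
  change twistₗ (Θₗ _) _ = ∑ i ∈ s, ∑ j ∈ s, _ • twistₗ (Θₗ _) _
  simp only [map_sum, map_smulₛₗ, LinearMap.sum_apply, LinearMap.smul_apply, Finset.smul_sum,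
    smul_smul, RingHom.id_apply]
  exact Finset.sum_comm.trans (by simp only [mul_comm])

lemma twist_theta_ofCoeffs (d : S.PIdx → ℂ) :
    S.twist (S.Θ (S.ofCoeffs d)) (S.ofCoeffs d)
      = ∑ p, ∑ q, (starRingEnd ℂ (d p) * d q) • S.twist (S.Θ (S.C p.1)) (S.C q.1) :=
  S.twist_theta_sum _ _ _

lemma Tr_twist_theta_ofCoeffs (d : S.PIdx → ℂ) :
    S.Tr (S.twist (S.Θ (S.ofCoeffs d)) (S.ofCoeffs d)) = (‖d S.nilIdx‖ : ℂ) ^ 2 := by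
  rw [twist_theta_ofCoeffs, map_sum]
  simp [S.Tr_twist_theta_C, ite_and, Complex.conj_mul']

lemma Tr_twist_theta_nonneg {D : S.carrier} (hD : D ∈ S.Aplus) :
    0 ≤ S.Tr (S.twist (S.Θ D) D) := by
  obtain ⟨d, rfl⟩ := S.exists_ofCoeffs_eq hD
  rw [Tr_twist_theta_ofCoeffs]
  positivity

def basis : Module.Basis (S.PIdx × S.PIdx) ℂ S.carrier :=
  .mk S.basis_indep fun x _ => S.basis_span x

instance : FiniteDimensional ℂ S.carrier := .of_basis S.basis

lemma Tr_gauge (x : S.carrier) : S.Tr (S.gauge x) = S.Tr x := by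
  have h : S.Tr ∘ₗ S.gauge.toLinearMap = S.Tr := S.basis.ext fun pq => by
    rw [LinearMap.comp_apply, AlgEquiv.toLinearMap_apply, basis, Module.Basis.mk_apply]
    change S.Tr (S.gauge (S.twist (S.Θ (S.C pq.1.1)) (S.C pq.2.1)))
      = S.Tr (S.twist (S.Θ (S.C pq.1.1)) (S.C pq.2.1))
    rw [(S.isHomogeneousPlus_C pq.1).gauge_twist_theta (S.isHomogeneousPlus_C pq.2), map_smul,
      Tr_twist_theta_C, smul_eq_mul]
    split_ifs with h
    · simp [h.1, h.2, nilIdx]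
    · rw [mul_zero]
  exact LinearMap.congr_fun h x

lemma Tr_eq_zero_of_gauge_eq_neg {x : S.carrier} (hx : S.gauge x = -x) : S.Tr x = 0 := by
  have h := S.Tr_gauge x
  rw [hx, map_neg] at h
  exact self_eq_neg.mp h.symm

def reflectionMonoid : Submonoid S.carrier where
  carrier := {X | ∃ b B, S.IsHomogeneousPlus b B ∧ S.twist (S.Θ B) B = X}
  one_mem' := ⟨0, 1, isHomogeneousPlus_one, by
    rw [isHomogeneousPlus_one.twist_theta_eq isHomogeneousPlus_one, S.theta_one]; simp⟩
  mul_mem' := by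
    rintro _ _ ⟨a, A, hA, rfl⟩ ⟨b, B, hB, rfl⟩
    exact ⟨a + b, A * B, hA.mul hB, (hA.twist_theta_mul hB).symm⟩

def reflectionCone : Subsemiring S.carrier := S.reflectionMonoid.subsemiringClosure

variable {S}

lemma Tr_twist_theta_mul_twist_theta_nonneg {A : S.carrier} (hA : A ∈ S.Aplus) {b : ℕ}
    {B : S.carrier} (hB : S.IsHomogeneousPlus b B) :
    0 ≤ S.Tr (S.twist (S.Θ A) A * S.twist (S.Θ B) B) := by
  obtain ⟨A₀, A₁, h₀, h₁, rfl⟩ := S.exists_isHomogeneousPlus_add_eq hA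
  have hsplit : S.twist (S.Θ (A₀ + A₁)) (A₀ + A₁) = S.twist (S.Θ A₀) A₀ + S.twist (S.Θ A₁) A₁
      + (S.twist (S.Θ A₀) A₁ + S.twist (S.Θ A₁) A₀) := by
    rw [S.Θ_add, S.twist_add_left, S.twist_add_right, S.twist_add_right]
    abel
  -- the mixed terms are gauge-odd, hence traceless
  have hmixed : S.gauge ((S.twist (S.Θ A₀) A₁ + S.twist (S.Θ A₁) A₀) * S.twist (S.Θ B) B)
      = -((S.twist (S.Θ A₀) A₁ + S.twist (S.Θ A₁) A₀) * S.twist (S.Θ B) B) := by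
    rw [map_mul, map_add, h₀.gauge_twist_theta h₁, h₁.gauge_twist_theta h₀,
      hB.gauge_twist_theta hB, (Even.add_self b).neg_one_pow]
    simp only [zero_add, add_zero, pow_one, neg_one_smul, one_smul]
    noncomm_ring
  rw [hsplit, add_mul, add_mul, map_add, map_add, S.Tr_eq_zero_of_gauge_eq_neg hmixed, add_zero,
    h₀.twist_theta_mul hB, h₁.twist_theta_mul hB]
  exact add_nonneg (S.Tr_twist_theta_nonneg (h₀.mul hB).1)
    (S.Tr_twist_theta_nonneg (h₁.mul hB).1)

lemma Tr_twist_theta_mul_nonneg {A : S.carrier} (hA : A ∈ S.Aplus) {X : S.carrier}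
    (hX : X ∈ S.reflectionCone) : 0 ≤ S.Tr (S.twist (S.Θ A) A * X) := by
  rw [reflectionCone, Submonoid.subsemiringClosure_mem] at hX
  induction hX using AddSubmonoid.closure_induction with
  | mem X hX =>
    obtain ⟨b, B, hB, rfl⟩ := hX
    exact Tr_twist_theta_mul_twist_theta_nonneg hA hB
  | zero => rw [mul_zero, map_zero]
  | add X Y _ _ hX hY => rw [mul_add, map_add]; exact add_nonneg hX hY

lemma IsHomogeneousPlus.twist_theta_mem_reflectionCone {b : ℕ} {B : S.carrier}
    (hB : S.IsHomogeneousPlus b B) : S.twist (S.Θ B) B ∈ S.reflectionCone := by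
  rw [reflectionCone, Submonoid.subsemiringClosure_mem]
  exact AddSubmonoid.subset_closure ⟨b, B, hB, rfl⟩

variable (S)

lemma neg_Ham_eq_of_gauge_invariant (Jc : List S.Λ → List S.Λ → ℂ)
    (hGI : S.gauge (S.Ham Jc) = S.Ham Jc) :
    -S.Ham Jc = ∑ p : S.PIdx, ∑ q : S.PIdx,
      (if p.1.length % 2 = q.1.length % 2 then Jc p.1 q.1 else 0) •
        S.twist (S.Θ (S.C p.1)) (S.C q.1) := by
  have hsum : -S.Ham Jc
      = ∑ p : S.PIdx, ∑ q : S.PIdx, Jc p.1 q.1 • S.twist (S.Θ (S.C p.1)) (S.C q.1) := by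
    simp only [Ham, neg_neg, ← Finset.sum_coe_sort S.P]
  have hinv : S.gauge (-S.Ham Jc) = -S.Ham Jc := by rw [map_neg, hGI]
  calc -S.Ham Jc = (2⁻¹ : ℂ) • (-S.Ham Jc + S.gauge (-S.Ham Jc)) := by
        rw [hinv, ← two_smul ℂ, smul_smul, inv_mul_cancel₀ two_ne_zero, one_smul]
    _ = _ := by
        rw [hsum]
        simp only [map_sum, map_smul, (S.isHomogeneousPlus_C _).gauge_twist_theta
          (S.isHomogeneousPlus_C _), smul_smul, ← Finset.sum_add_distrib, ← add_smul,
          Finset.smul_sum]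
        refine Finset.sum_congr rfl fun p _ => Finset.sum_congr rfl fun q _ => ?_
        rw [show (2⁻¹ : ℂ) * (Jc p.1 q.1 + Jc p.1 q.1 * (-1) ^ (p.1.length + q.1.length))
          = 2⁻¹ * (1 + (-1) ^ (p.1.length + q.1.length)) * Jc p.1 q.1 by ring,
          inv_two_mul_one_add_neg_one_pow, ite_mul, one_mul, zero_mul]

lemma conj_parityPart_mul_add (d : S.PIdx → ℂ) (p q : S.PIdx) :
    starRingEnd ℂ (S.parityPart 0 d p) * S.parityPart 0 d q
      + starRingEnd ℂ (S.parityPart 1 d p) * S.parityPart 1 d q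
      = if p.1.length % 2 = q.1.length % 2 then starRingEnd ℂ (d p) * d q else 0 := by
  simp only [parityPart]
  rcases Nat.mod_two_eq_zero_or_one p.1.length with hp | hp <;>
    rcases Nat.mod_two_eq_zero_or_one q.1.length with hq | hq <;> simp [hp, hq]

lemma neg_Ham_mem_reflectionCone (Jc : List S.Λ → List S.Λ → ℂ)
    (hGI : S.gauge (S.Ham Jc) = S.Ham Jc) (hpsd : (S.Jmat Jc).PosSemidef) :
    -S.Ham Jc ∈ S.reflectionCone := by
  obtain ⟨m, v, hv⟩ := Matrix.posSemidef_iff_eq_sum_vecMulVec.mp hpsd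
  set D : Fin m → ℕ → S.carrier := fun k i => S.ofCoeffs (S.parityPart i (star (v k)))
  -- `J = ∑ₖ vₖ vₖᴴ`, and `-H` has no couplings of mixed parity, so each `vₖ` may be split by parity
  have hdecomp : -S.Ham Jc
      = ∑ k, (S.twist (S.Θ (D k 0)) (D k 0) + S.twist (S.Θ (D k 1)) (D k 1)) := by
    simp only [D, twist_theta_ofCoeffs, ← Finset.sum_add_distrib, ← add_smul,
      conj_parityPart_mul_add, S.neg_Ham_eq_of_gauge_invariant Jc hGI]
    symm
    rw [Finset.sum_comm]
    refine Finset.sum_congr rfl fun p _ => ?_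
    rw [Finset.sum_comm]
    refine Finset.sum_congr rfl fun q _ => ?_
    rw [← Finset.sum_smul]
    congr 1
    split_ifs
    · simpa [Jmat, Matrix.sum_apply, Matrix.vecMulVec_apply] using (congrFun (congrFun hv p) q).symm
    · simp
  rw [hdecomp]
  exact sum_mem fun k _ => add_mem
    (S.isHomogeneousPlus_ofCoeffs_parityPart 0 _).twist_theta_mem_reflectionCone
    (S.isHomogeneousPlus_ofCoeffs_parityPart 1 _).twist_theta_mem_reflectionCone

end MajoranaSetting

theorem lower_bound_identity_coeff_general (S : MajoranaSetting)
    (Jc : List S.Λ → List S.Λ → ℂ)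
    (hGI : S.gauge (S.Ham Jc) = S.Ham Jc)
    (hpsd : (S.Jmat Jc).PosSemidef)
    (a : List S.Λ → ℂ) (A : S.carrier)
    (hA : A = ∑ J ∈ S.P, a J • S.C J) :
    ((‖a []‖) ^ 2 : ℂ)
      ≤ S.Tr (S.twist (S.Θ A) A * S.expm (-(S.Ham Jc))) := by
  have hcoeffs : A = S.ofCoeffs fun p => a p.1 := by
    rw [hA, MajoranaSetting.ofCoeffs, Finset.sum_coe_sort S.P (fun J => a J • S.C J)]
  have hAplus : A ∈ S.Aplus := hcoeffs ▸ S.ofCoeffs_mem_Aplus _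
  let f : S.carrier →L[ℂ] ℂ :=
    LinearMap.toContinuousLinearMap (S.Tr ∘ₗ LinearMap.mulLeft ℂ (S.twist (S.Θ A) A))
  have hexp := (NormedSpace.exp_series_hasSum_exp' (𝕂 := ℂ) (-S.Ham Jc)).mapL f
  have hterm : ∀ n : ℕ, 0 ≤ f ((n.factorial : ℂ)⁻¹ • (-S.Ham Jc) ^ n) := fun n => by
    rw [map_smul, smul_eq_mul]
    exact mul_nonneg (by positivity) (S.Tr_twist_theta_mul_nonneg hAplus
      (pow_mem (S.neg_Ham_mem_reflectionCone Jc hGI hpsd) n))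
  calc ((‖a []‖) ^ 2 : ℂ) = f ((Nat.factorial 0 : ℂ)⁻¹ • (-S.Ham Jc) ^ 0) := by
        simp [f, hcoeffs, S.Tr_twist_theta_ofCoeffs, MajoranaSetting.nilIdx]
    _ ≤ S.Tr (S.twist (S.Θ A) A * S.expm (-(S.Ham Jc))) := le_hasSum hexp 0 fun n _ => hterm n

/-- under the hypotheses of Part I (reflection invariance, global
gauge invariance, `J` positive semidefinite), for `A = ∑_{𝔍∈𝒫₊} a_𝔍 C_𝔍 ∈ 𝔄₊`
one has `Tr((Θ(A)∘A) e^{-H}) ≥ |a_∅|²`. -/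
theorem lower_bound_identity_coeff (S : MajoranaSetting)
    (Jc : List S.Λ → List S.Λ → ℂ)
    (hRI : S.Θ (S.Ham Jc) = S.Ham Jc)
    (hGI : S.gauge (S.Ham Jc) = S.Ham Jc)
    (hpsd : (S.Jmat Jc).PosSemidef)
    (a : List S.Λ → ℂ) (A : S.carrier)
    (hA : A = ∑ J ∈ S.P, a J • S.C J) :
    ((‖a []‖) ^ 2 : ℂ)
      ≤ S.Tr (S.twist (S.Θ A) A * S.expm (-(S.Ham Jc))) :=
  lower_bound_identity_coeff_general S Jc hGI hpsd a A hA
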